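/- Let (s,w) be a base of the Coxeter system (W,S): w = j₁⋯jₙ with jᵢ ∈ S, the gallery distance from w·c₀ to the wall of s in the Davis complex (Cayley graph) equals n, and J = {s, j₁, …, jₙ} is spherical. Then J is irreducible. -/

import Mathlib

variable {B W : Type} [Group W]

/-- A subset `J` of the index set is spherical if the standard parabolic subgroup it
generates is finite. -/
def SphericalIdx {M : CoxeterMatrix B} (cs : CoxeterSystem M W) (J : Set B) : Prop :=
  Set.Finite ((Subgroup.closure (cs.simple '' J) : Subgroup W) : Set W)

/-- A Coxeter system is of type FC if every subset of pairwise adjacent indices is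
spherical. -/
def IsFC {M : CoxeterMatrix B} (cs : CoxeterSystem M W) : Prop :=
  ∀ J : Set B, (∀ a ∈ J, ∀ b ∈ J, a ≠ b → M a b ≠ 0) → SphericalIdx cs J

/-- `K^⊥` at the level of the index set. -/
def perpIdx (M : CoxeterMatrix B) (K : Set B) : Set B :=
  {a | a ∉ K ∧ ∀ k ∈ K, M a k = 2}

/-- `J` is irreducible: not contained in `K ∪ K^⊥` for non-empty proper `K ⊂ J`. -/
def IrredIdx (M : CoxeterMatrix B) (J : Set B) : Prop :=
  ∀ K : Set B, K ⊂ J → K.Nonempty → ¬ J ⊆ K ∪ perpIdx M K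

/-- The chamber `y` of the Davis complex (Cayley graph) of `(W,S)` is incident to the
wall of the reflection `x`: it is an endpoint of an edge dual to the wall, i.e.
`y⁻¹ x y` is a simple reflection. -/
def IncidentWall {M : CoxeterMatrix B} (cs : CoxeterSystem M W) (x y : W) : Prop :=
  ∃ j : B, y⁻¹ * x * y = cs.simple j

/-- If `M a k = 2` then the corresponding simple reflections commute. -/
lemma simple_comm_of_M_eq_two {M : CoxeterMatrix B} (cs : CoxeterSystem M W) {a k : B}
    (h : M a k = 2) : cs.simple a * cs.simple k = cs.simple k * cs.simple a := by
  have h1 : (cs.simple a * cs.simple k) ^ (M a k) = 1 := cs.simple_mul_simple_pow a k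
  rw [h, pow_two] at h1
  have : cs.simple a * cs.simple k = (cs.simple a * cs.simple k)⁻¹ :=
    eq_inv_of_mul_eq_one_left h1
  rw [this, mul_inv_rev, cs.inv_simple, cs.inv_simple]

/-- A word product commutes with any element commuting with all its letters. -/
lemma wordProd_comm_of_forall {M : CoxeterMatrix B} (cs : CoxeterSystem M W)
    (l : List B) (x : W) (h : ∀ b ∈ l, cs.simple b * x = x * cs.simple b) :
    cs.wordProd l * x = x * cs.wordProd l := by
  induction l with
  | nil => simp
  | cons b t ih =>
      rw [cs.wordProd_cons, mul_assoc, ih (fun c hc => h c (List.mem_cons_of_mem b hc)),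
        ← mul_assoc, h b List.mem_cons_self, mul_assoc]

/-- If letters where `p` fails commute with letters where `p` holds, the word product
splits as the product of the two filtered subwords. -/
lemma wordProd_filter_split {M : CoxeterMatrix B} (cs : CoxeterSystem M W)
    (p : B → Bool) (l : List B)
    (hcomm : ∀ a ∈ l, p a = false → ∀ b ∈ l, p b = true →
      cs.simple a * cs.simple b = cs.simple b * cs.simple a) :
    cs.wordProd l = cs.wordProd (l.filter p) * cs.wordProd (l.filter (fun b => !p b)) := by
  induction l with
  | nil => simp
  | cons b t ih =>
      have ih' := ih (fun a ha hfa c hc hc' =>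
        hcomm a (List.mem_cons_of_mem b ha) hfa c (List.mem_cons_of_mem b hc) hc')
      rcases hb : p b with _ | _
      · rw [List.filter_cons_of_neg (by simp [hb]), List.filter_cons_of_pos (by simp [hb]),
          cs.wordProd_cons, cs.wordProd_cons, ih', ← mul_assoc, ← mul_assoc]
        congr 1
        exact (wordProd_comm_of_forall cs (t.filter p) (cs.simple b)
          (fun c hc => (hcomm b List.mem_cons_self hb c
            (List.mem_cons_of_mem b (List.mem_of_mem_filter hc))
            (List.of_mem_filter hc)).symm)).symm
      · rw [List.filter_cons_of_pos (by simp [hb]), List.filter_cons_of_neg (by simp [hb]),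
          cs.wordProd_cons, cs.wordProd_cons, ih', mul_assoc]

/-- Let `(s, w)` be a base of the Coxeter system `(W,S)` of type FC: `w = j₁⋯jₙ`, the
gallery distance in the Davis complex from the chamber `w·c₀` to the wall `Y_s` of `s`
equals `n`, and the support `J = {s, j₁, …, jₙ}` is spherical.  Then `J` is
irreducible. -/
theorem base_support_irreducible
    (M : CoxeterMatrix B) (cs : CoxeterSystem M W) (hFC : IsFC cs)
    (s : B) (ω : List B)
    -- condition (ii): `d(w·c₀, Y_s) = n`, i.e. every chamber incident to `Y_s` is at
    -- gallery distance at least `n` from `w·c₀ = π ω`, and some such chamber is at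
    -- distance exactly `n`
    (hlb : ∀ y : W, IncidentWall cs (cs.simple s) y →
      ω.length ≤ cs.length ((cs.wordProd ω)⁻¹ * y))
    (hub : ∃ y : W, IncidentWall cs (cs.simple s) y ∧
      cs.length ((cs.wordProd ω)⁻¹ * y) = ω.length)
    -- condition (iii): the support is spherical
    (hsph : SphericalIdx cs (insert s {b | b ∈ ω})) :
    IrredIdx M (insert s {b | b ∈ ω}) := by
  classical
  intro K hK hKne hsub
  have hmem : ∀ b ∈ ω, b ∈ insert s {b | b ∈ ω} := fun b hb => Set.mem_insert_iff.mpr (Or.inr hb)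
  have hperp : ∀ b ∈ ω, b ∉ K → b ∈ perpIdx M K := by
    intro b hb hbK
    rcases hsub (hmem b hb) with h | h
    · exact absurd h hbK
    · exact h
  set p : B → Bool := fun b => decide (b ∈ K) with hp
  have hcomm : ∀ a ∈ ω, p a = false → ∀ b ∈ ω, p b = true →
      cs.simple a * cs.simple b = cs.simple b * cs.simple a := by
    intro a ha hfa b hb hfb
    exact simple_comm_of_M_eq_two cs
      ((hperp a ha (by simpa [hp] using hfa)).2 b (by simpa [hp] using hfb))
  have hsplit := wordProd_filter_split cs p ω hcomm
  set u := cs.wordProd (ω.filter p) with hu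
  set v := cs.wordProd (ω.filter (fun b => !p b)) with hv
  have hlen := List.length_eq_length_filter_add (l := ω) p
  by_cases hsK : s ∈ K
  · -- take y = v, the product of the letters of ω that are orthogonal to K
    have hvcomm : v * cs.simple s = cs.simple s * v := by
      apply wordProd_comm_of_forall
      intro b hb
      have hbK : b ∉ K := by simpa [hp] using List.of_mem_filter hb
      exact simple_comm_of_M_eq_two cs ((hperp b (List.mem_of_mem_filter hb) hbK).2 s hsK)
    have hinc : IncidentWall cs (cs.simple s) v :=
      ⟨s, by rw [mul_assoc, ← hvcomm, ← mul_assoc, inv_mul_cancel, one_mul]⟩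
    have cuv : Commute u v := by
      apply wordProd_comm_of_forall
      intro b hb
      exact (wordProd_comm_of_forall cs _ (cs.simple b) (fun c hc =>
        simple_comm_of_M_eq_two cs
          ((hperp c (List.mem_of_mem_filter hc)
            (by simpa [hp] using List.of_mem_filter hc)).2 b
            (by simpa [hp] using List.of_mem_filter hb)))).symm
    have hcalc : (cs.wordProd ω)⁻¹ * v = u⁻¹ := by
      rw [hsplit, mul_inv_rev, mul_assoc, cuv.inv_left.eq, ← mul_assoc, inv_mul_cancel, one_mul]
    have hle := hlb v hinc
    rw [hcalc, cs.length_inv] at hle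
    have h1 : cs.length u ≤ (ω.filter p).length := cs.length_wordProd_le _
    obtain ⟨t, htJ, htK⟩ := Set.exists_of_ssubset hK
    have htω : t ∈ ω := by
      rcases htJ with h | h
      · exact absurd (h ▸ hsK) htK
      · exact h
    have ht : t ∈ ω.filter (fun b => !p b) := List.mem_filter.mpr ⟨htω, by simp [hp, htK]⟩
    have h2 : 0 < (ω.filter (fun b => !p b)).length := List.length_pos_iff.mpr (List.ne_nil_of_mem ht)
    omega
  · -- take y = u, the product of the letters of ω that lie in K
    have hsperp : s ∈ perpIdx M K := by
      rcases hsub (Set.mem_insert s _) with h | h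
      · exact absurd h hsK
      · exact h
    have hucomm : u * cs.simple s = cs.simple s * u := by
      apply wordProd_comm_of_forall
      intro b hb
      have hbK : b ∈ K := by simpa [hp] using List.of_mem_filter hb
      exact (simple_comm_of_M_eq_two cs (hsperp.2 b hbK)).symm
    have hinc : IncidentWall cs (cs.simple s) u :=
      ⟨s, by rw [mul_assoc, ← hucomm, ← mul_assoc, inv_mul_cancel, one_mul]⟩
    have hcalc : (cs.wordProd ω)⁻¹ * u = v⁻¹ := by
      rw [hsplit, mul_inv_rev, mul_assoc, inv_mul_cancel, mul_one]
    have hle := hlb u hinc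
    rw [hcalc, cs.length_inv] at hle
    have h1 : cs.length v ≤ (ω.filter (fun b => !p b)).length := cs.length_wordProd_le _
    obtain ⟨k, hkK⟩ := hKne
    have hkω : k ∈ ω := by
      rcases hK.subset hkK with h | h
      · exact absurd (h ▸ hkK) hsK
      · exact h
    have hk : k ∈ ω.filter p := List.mem_filter.mpr ⟨hkω, by simp [hp, hkK]⟩
    have h2 : 0 < (ω.filter p).length := List.length_pos_iff.mpr (List.ne_nil_of_mem hk)
    omega
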